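/- arXiv:1608.06977 — 2 statements merged into one kernel-verified Lean document; each statement's English description precedes it below -/
import Mathlib

section
/- Let H be a Hermitian matrix, v a unit vector, λ ∈ ℝ, ε > 0, and w a unit vector orthogonal to v with H v = λ v + ε w. Suppose H has exactly one eigenvalue λ_ε (counted with multiplicity) satisfying |λ − λ_ε| ≤ ε, and all other eigenvalues of H are at distance at least d > ε from λ. Then any unit eigenvector v_ε of H associated with λ_ε satisfies ‖v_ε − P_v(v_ε)‖₂ ≤ 2ε/(d − ε), where P_v denotes orthogonal projection onto the span of v. -/
/-!
Expand in an orthonormal eigenbasis `(b j)` of `H`. Every eigenvalue `μ j` with `j ≠ i₀` is at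
distance `≥ d > ε ≥ |λ - μ i₀|` from `λ`, so `μ i₀` is simple and `vε` is a unimodular multiple of
`b i₀`. For unit vectors `‖x - ⟪u, x⟫ u‖² = 1 - |⟪u, x⟫|²` is symmetric in `u` and `x`, so it
suffices to bound the distance from `v` to the line through `b i₀`. By Parseval,
`d² ∑_{j ≠ i₀} |v_j|² ≤ ∑_j |μ j - λ|² |v_j|² = ‖(H - λ) v‖² = ε²`, which even gives `ε / d`.
-/

open scoped InnerProductSpace

section UnitVectors

variable {𝕜 E : Type*} [RCLike 𝕜] [NormedAddCommGroup E] [InnerProductSpace 𝕜 E]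

theorem norm_sub_inner_smul_sq {u : E} (hu : ‖u‖ = 1) (x : E) :
    ‖x - ⟪u, x⟫_𝕜 • u‖ ^ 2 = ‖x‖ ^ 2 - ‖⟪u, x⟫_𝕜‖ ^ 2 := by
  rw [@norm_sub_sq 𝕜, inner_smul_right, ← inner_conj_symm u x, RCLike.conj_mul, norm_smul, hu,
    RCLike.norm_conj]
  norm_cast
  ring

theorem norm_sub_inner_smul_comm {u x : E} (hu : ‖u‖ = 1) (hx : ‖x‖ = 1) :
    ‖x - ⟪u, x⟫_𝕜 • u‖ = ‖u - ⟪x, u⟫_𝕜 • x‖ := by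
  rw [← sq_eq_sq₀ (norm_nonneg _) (norm_nonneg _), norm_sub_inner_smul_sq hu,
    norm_sub_inner_smul_sq hx, hu, hx, norm_inner_symm]

theorem inner_smul_smul_smul_of_norm_eq_one {c : 𝕜} (hc : ‖c‖ = 1) (u x : E) :
    ⟪c • u, x⟫_𝕜 • c • u = ⟪u, x⟫_𝕜 • u := by
  rw [inner_smul_left, smul_smul, mul_assoc, mul_comm, mul_assoc, RCLike.mul_conj, hc]
  simp

end UnitVectors

namespace OrthonormalBasis

variable {𝕜 E ι : Type*} [RCLike 𝕜] [NormedAddCommGroup E] [InnerProductSpace 𝕜 E]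
  [Fintype ι] (b : OrthonormalBasis ι 𝕜 E) {T : E →ₗ[𝕜] E} {μ : ι → 𝕜}

theorem repr_apply_of_apply_eq_smul (hb : ∀ j, T (b j) = μ j • b j) (x : E) (j : ι) :
    b.repr (T x) j = μ j * b.repr x j := by
  classical
  conv_lhs => rw [← b.sum_repr x]
  simp [hb, b.repr_self, Pi.single_apply, mul_comm]

theorem repr_eq_zero_of_apply_eq_smul (hb : ∀ j, T (b j) = μ j • b j) {x : E} {i j : ι}
    (hx : T x = μ i • x) (hij : μ j ≠ μ i) : b.repr x j = 0 := by
  have h := b.repr_apply_of_apply_eq_smul hb x j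
  rw [hx, map_smul, PiLp.smul_apply, smul_eq_mul] at h
  exact (mul_eq_mul_right_iff.mp h.symm).resolve_left hij

theorem eq_repr_smul_of_apply_eq_smul (hb : ∀ j, T (b j) = μ j • b j) {x : E} {i : ι}
    (hx : T x = μ i • x) (hi : ∀ j ≠ i, μ j ≠ μ i) : x = b.repr x i • b i := by
  classical
  refine b.repr.injective (PiLp.ext fun j => ?_)
  rcases eq_or_ne j i with rfl | hj
  · simp [b.repr_self]
  · simp [b.repr_self, hj, b.repr_eq_zero_of_apply_eq_smul hb hx (hi j hj)]

theorem mul_norm_sub_repr_smul_le (hb : ∀ j, T (b j) = μ j • b j) {i : ι} {c : 𝕜} {d : ℝ}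
    (hd : 0 ≤ d) (hgap : ∀ j ≠ i, d ≤ ‖μ j - c‖) (x : E) :
    d * ‖x - b.repr x i • b i‖ ≤ ‖T x - c • x‖ := by
  classical
  refine le_of_pow_le_pow_left₀ two_ne_zero (norm_nonneg _) ?_
  rw [mul_pow, ← b.repr.norm_map, ← b.repr.norm_map (T x - c • x), EuclideanSpace.norm_sq_eq,
    EuclideanSpace.norm_sq_eq, Finset.mul_sum]
  refine Finset.sum_le_sum fun j _ => ?_
  rcases eq_or_ne j i with rfl | hj
  · simp [b.repr_self]
  · simp only [map_sub, map_smul, PiLp.sub_apply, PiLp.smul_apply, b.repr_self,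
      b.repr_apply_of_apply_eq_smul hb, smul_eq_mul, ← sub_mul, norm_mul, mul_pow]
    simp only [ne_eq, hj, not_false_eq_true, PiLp.single_eq_of_ne, mul_zero, sub_zero]
    gcongr
    exact hgap j hj

end OrthonormalBasis

theorem eigenvector_perturbation_general {n : ℕ} (H : Matrix (Fin n) (Fin n) ℂ)
    (hH : H.IsHermitian) (v w : EuclideanSpace ℂ (Fin n)) (lam ε d : ℝ)
    (hd : ε < d)
    (hv : ‖v‖ = 1) (hw : ‖w‖ = 1)
    (heq : Matrix.toEuclideanCLM (𝕜 := ℂ) H v = (lam : ℂ) • v + (ε : ℂ) • w)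
    (i₀ : Fin n) (hi₀ : |lam - hH.eigenvalues i₀| ≤ ε)
    (hunique : ∀ j : Fin n, j ≠ i₀ → d ≤ |lam - hH.eigenvalues j|)
    (vε : EuclideanSpace ℂ (Fin n)) (hvε : ‖vε‖ = 1)
    (heig : Matrix.toEuclideanCLM (𝕜 := ℂ) H vε = (hH.eigenvalues i₀ : ℂ) • vε) :
    ‖vε - (inner ℂ v vε : ℂ) • v‖ ≤ 2 * ε / (d - ε) := by
  set b := hH.eigenvectorBasis
  set T := (Matrix.toEuclideanCLM (𝕜 := ℂ) H).toLinearMap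
  have hε : 0 ≤ ε := (abs_nonneg _).trans hi₀
  have hb : ∀ j, T (b j) = (hH.eigenvalues j : ℂ) • b j := fun j =>
    WithLp.ofLp_injective 2 <| by
      simpa [T, Complex.real_smul] using hH.mulVec_eigenvectorBasis j
  have hgap : ∀ j ≠ i₀, d ≤ ‖(hH.eigenvalues j : ℂ) - lam‖ := fun j hj => by
    rw [← Complex.ofReal_sub, Complex.norm_real, Real.norm_eq_abs, abs_sub_comm]
    exact hunique j hj
  have hsimple : ∀ j ≠ i₀, (hH.eigenvalues j : ℂ) ≠ hH.eigenvalues i₀ := fun j hj h => by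
    have := hunique j hj
    rw [← Complex.ofReal_inj.mp h] at hi₀
    linarith
  have hvε_eq := b.eq_repr_smul_of_apply_eq_smul hb heig hsimple
  set c := b.repr vε i₀
  have hc : ‖c‖ = 1 := by rw [← hvε, hvε_eq, norm_smul, b.norm_eq_one, mul_one]
  have hv_dist := b.mul_norm_sub_repr_smul_le hb (hε.trans hd.le) hgap v
  calc ‖vε - (inner ℂ v vε : ℂ) • v‖ = ‖v - (inner ℂ vε v : ℂ) • vε‖ :=
        norm_sub_inner_smul_comm hv hvε
    _ = ‖v - b.repr v i₀ • b i₀‖ := by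
      rw [hvε_eq, inner_smul_smul_smul_of_norm_eq_one hc, b.repr_apply_apply]
    _ ≤ ε / d := by
      rw [le_div_iff₀ (hε.trans_lt hd), mul_comm]
      simpa [T, heq, norm_smul, hw, abs_of_nonneg hε] using hv_dist
    _ ≤ 2 * ε / (d - ε) := by
      rw [div_le_div_iff₀ (hε.trans_lt hd) (sub_pos.mpr hd)]
      nlinarith

/-- Perturbation of eigenvectors (Benaych-Georges, Péché): if `H v = λ v + ε w` with `v ⊥ w`
unit vectors, `H` has exactly one eigenvalue `λ_ε` (with multiplicity) within `ε` of `λ`,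
and all other eigenvalues are at distance at least `d > ε` from `λ`, then any unit
eigenvector `vε` for `λ_ε` satisfies `‖vε − P_v vε‖ ≤ 2ε/(d − ε)`. -/
theorem eigenvector_perturbation {n : ℕ} (H : Matrix (Fin n) (Fin n) ℂ)
    (hH : H.IsHermitian) (v w : EuclideanSpace ℂ (Fin n)) (lam ε d : ℝ)
    (hε : 0 < ε) (hd : ε < d)
    (hv : ‖v‖ = 1) (hw : ‖w‖ = 1) (hvw : (inner ℂ v w : ℂ) = 0)
    (heq : Matrix.toEuclideanCLM (𝕜 := ℂ) H v = (lam : ℂ) • v + (ε : ℂ) • w)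
    (i₀ : Fin n) (hi₀ : |lam - hH.eigenvalues i₀| ≤ ε)
    (hunique : ∀ j : Fin n, j ≠ i₀ → d ≤ |lam - hH.eigenvalues j|)
    (vε : EuclideanSpace ℂ (Fin n)) (hvε : ‖vε‖ = 1)
    (heig : Matrix.toEuclideanCLM (𝕜 := ℂ) H vε = (hH.eigenvalues i₀ : ℂ) • vε) :
    ‖vε - (inner ℂ v vε : ℂ) • v‖ ≤ 2 * ε / (d - ε) :=
  eigenvector_perturbation_general H hH v w lam ε d hd hv hw heq i₀ hi₀ hunique vε hvε heig
end

section
/- Let (δ_n) be a sequence of positive reals with δ_n → 0, let (x_n) and (y_n) be sequences of nonnegative reals, and suppose that for some constant c > 0 and all n: x_n ≤ c δ_n √(y_n) + c δ_n √(x_n), where y_n → 0. If additionally x_n ≤ n^L for some fixed L and all large n, and δ_n ≤ n^{-η} for some η > 0, then x_n → 0. -/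
open Filter

/-- Deterministic iteration lemma: if `0 ≤ x_n ≤ c δ_n (√y_n + √x_n)` with `δ_n → 0`,
`y_n → 0`, `x_n` polynomially bounded and `δ_n ≤ n^{−η}` for some `η > 0`,
then `x_n → 0`. -/
theorem iteration_lemma (c : ℝ) (hc : 0 < c) (δ x y : ℕ → ℝ)
    (hδpos : ∀ n, 0 < δ n) (hδ0 : Tendsto δ atTop (nhds 0))
    (hx : ∀ n, 0 ≤ x n) (hy : ∀ n, 0 ≤ y n)
    (hrec : ∀ n, x n ≤ c * δ n * Real.sqrt (y n) + c * δ n * Real.sqrt (x n))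
    (hy0 : Tendsto y atTop (nhds 0))
    (hpoly : ∃ L : ℝ, ∀ᶠ n in atTop, x n ≤ (n : ℝ) ^ L)
    (hη : ∃ η : ℝ, 0 < η ∧ ∀ n : ℕ, 1 ≤ n → δ n ≤ (n : ℝ) ^ (-η)) :
    Tendsto x atTop (nhds 0) := by
  have hbound : ∀ n, x n ≤ 2 * c * δ n * Real.sqrt (y n) + c ^ 2 * δ n ^ 2 := by
    intro n
    have h1 := hrec n
    have hs : Real.sqrt (x n) ^ 2 = x n := Real.sq_sqrt (hx n)
    have hsnn : 0 ≤ Real.sqrt (x n) := Real.sqrt_nonneg _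
    nlinarith [sq_nonneg (c * δ n - Real.sqrt (x n))]
  have hg : Tendsto (fun n => 2 * c * δ n * Real.sqrt (y n) + c ^ 2 * δ n ^ 2)
      atTop (nhds 0) := by
    have hsy : Tendsto (fun n => Real.sqrt (y n)) atTop (nhds 0) := by
      have := hy0.sqrt
      simpa using this
    have h1 : Tendsto (fun n => 2 * c * δ n * Real.sqrt (y n)) atTop (nhds 0) := by
      have := ((tendsto_const_nhds (x := (2 * c : ℝ))).mul hδ0).mul hsy
      simpa using this
    have h2 : Tendsto (fun n => c ^ 2 * δ n ^ 2) atTop (nhds 0) := by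
      have := (tendsto_const_nhds (x := (c ^ 2 : ℝ))).mul (hδ0.mul hδ0)
      simpa [pow_two] using this
    simpa using h1.add h2
  exact squeeze_zero hx hbound hg
end
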